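/- Let b ∈ ℂ and k₁ ∈ ℂ with k₁ ≠ 0, and set a = 1. The ℂ-bilinear product ∘ on A defined on basis elements by L_m∘L_n = 2bL_{m+n+1} − (n+1)L_{m+n}, L_m∘W_n = −(n+1)W_{m+n} + bW_{m+n+1}, W_m∘L_n = 0 and W_m∘W_n = k₁L_{m+n+1} is left-symmetric, and it is a compatible left-symmetric algebraic structure on the Lie algebra Coeff(W(1,b)). -/

import Mathlib

/-!
Both identities are multilinear, so they need only be checked on the basis `{L m} ∪ {W m}`, where
every term is a short explicit combination of basis vectors. Left-symmetry says that the
associator `(x, y, z) ↦ (x ∘ y) ∘ z - x ∘ (y ∘ z)`, viewed as a bilinear map into `A →ₗ A`, equals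
its flip.
-/

namespace LinearMap

variable {R V ι : Type*} [CommSemiring R] [AddCommGroup V] [Module R V]

def associator (M : V →ₗ[R] V →ₗ[R] V) : V →ₗ[R] V →ₗ[R] V →ₗ[R] V :=
  M.compr₂ M - (llcomp R V V V ∘ₗ M).compl₂ M

@[simp]
theorem associator_apply (M : V →ₗ[R] V →ₗ[R] V) (x y z : V) :
    associator M x y z = M (M x y) z - M x (M y z) :=
  rfl

def IsLeftSymmetric (M : V →ₗ[R] V →ₗ[R] V) : Prop :=
  ∀ x y z, M (M x y) z - M x (M y z) = M (M y x) z - M y (M x z)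

theorem isLeftSymmetric_of_basis (e : Module.Basis ι R V) (M : V →ₗ[R] V →ₗ[R] V)
    (h : ∀ i j k, associator M (e i) (e j) (e k) = associator M (e j) (e i) (e k)) :
    IsLeftSymmetric M := by
  have : associator M = (associator M).flip := ext_basis e e fun i j => e.ext fun k => h i j k
  intro x y z
  simpa using congr($this x y z)

theorem sub_flip_eq_of_basis (e : Module.Basis ι R V) (M B : V →ₗ[R] V →ₗ[R] V)
    (h : ∀ i j, M (e i) (e j) - M (e j) (e i) = B (e i) (e j)) (x y : V) :
    M x y - M y x = B x y := by
  have : M - M.flip = B := ext_basis e e h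
  exact congr($this x y)

end LinearMap

noncomputable section

/-- `A` is the free `ℂ`-vector space with basis `{L m : m ∈ ℤ} ∪ {W m : m ∈ ℤ}`. -/
abbrev A : Type := (ℤ ⊕ ℤ) →₀ ℂ

/-- The basis vector `L m`. -/
def L (m : ℤ) : A := Finsupp.single (Sum.inl m) 1

/-- The basis vector `W m`. -/
def W (m : ℤ) : A := Finsupp.single (Sum.inr m) 1

def lwBasis : Module.Basis (ℤ ⊕ ℤ) ℂ A :=
  Finsupp.basisSingleOne

@[simp]
theorem lwBasis_inl (m : ℤ) : lwBasis (Sum.inl m) = L m := by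
  simp [lwBasis, L]

@[simp]
theorem lwBasis_inr (m : ℤ) : lwBasis (Sum.inr m) = W m := by
  simp [lwBasis, W]

/- In each of the eight cases both associators come out as explicit combinations of
`L (m + n + p + i)` or `W (m + n + p + i)`, `i ∈ {0, 1, 2}`, with coefficients depending only on
`p`. -/
theorem associator_lwBasis_comm {b k₁ : ℂ} {M : A →ₗ[ℂ] A →ₗ[ℂ] A}
    (hLL : ∀ m n : ℤ, M (L m) (L n) = (2 * b) • L (m + n + 1) - ((n : ℂ) + 1) • L (m + n))
    (hLW : ∀ m n : ℤ, M (L m) (W n) = -((n : ℂ) + 1) • W (m + n) + b • W (m + n + 1))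
    (hWL : ∀ m n : ℤ, M (W m) (L n) = 0)
    (hWW : ∀ m n : ℤ, M (W m) (W n) = k₁ • L (m + n + 1)) (s t u : ℤ ⊕ ℤ) :
    M.associator (lwBasis s) (lwBasis t) (lwBasis u) =
      M.associator (lwBasis t) (lwBasis s) (lwBasis u) := by
  rcases s with m | m <;> rcases t with n | n <;> rcases u with p | p <;>
    simp only [lwBasis_inl, lwBasis_inr, LinearMap.associator_apply,
      hLL, hLW, hWL, hWW, map_add, map_sub, map_smul, map_zero, LinearMap.add_apply,
      LinearMap.sub_apply, LinearMap.smul_apply, LinearMap.zero_apply] <;>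
    push_cast <;> ring_nf <;> module

theorem sub_lwBasis_eq_bracket {b k₁ : ℂ} {M B : A →ₗ[ℂ] A →ₗ[ℂ] A}
    (hLL : ∀ m n : ℤ, M (L m) (L n) = (2 * b) • L (m + n + 1) - ((n : ℂ) + 1) • L (m + n))
    (hLW : ∀ m n : ℤ, M (L m) (W n) = -((n : ℂ) + 1) • W (m + n) + b • W (m + n + 1))
    (hWL : ∀ m n : ℤ, M (W m) (L n) = 0)
    (hWW : ∀ m n : ℤ, M (W m) (W n) = k₁ • L (m + n + 1))
    (hBLL : ∀ m n : ℤ, B (L m) (L n) = ((m : ℂ) - (n : ℂ)) • L (m + n))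
    (hBLW : ∀ m n : ℤ, B (L m) (W n) =
      (((m : ℂ) + 1) * ((1 : ℂ) - 1) - ((n : ℂ) + 1)) • W (m + n) + b • W (m + n + 1))
    (hBWL : ∀ m n : ℤ, B (W n) (L m) = -B (L m) (W n))
    (hBWW : ∀ m n : ℤ, B (W m) (W n) = 0) (s t : ℤ ⊕ ℤ) :
    M (lwBasis s) (lwBasis t) - M (lwBasis t) (lwBasis s) = B (lwBasis s) (lwBasis t) := by
  rcases s with m | m <;> rcases t with n | n <;>
    simp only [lwBasis_inl, lwBasis_inr, hLL, hLW, hWL, hWW, hBLL, hBLW, hBWL,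
      hBWW, add_comm n m] <;>
    module

theorem stmt15_general (b k₁ : ℂ)
    -- `M` is the ℂ-bilinear product `∘` given on basis elements by:
    (M : A →ₗ[ℂ] A →ₗ[ℂ] A)
    (hLL : ∀ m n : ℤ, M (L m) (L n) = (2 * b) • L (m + n + 1) - ((n : ℂ) + 1) • L (m + n))
    (hLW : ∀ m n : ℤ, M (L m) (W n) = -((n : ℂ) + 1) • W (m + n) + b • W (m + n + 1))
    (hWL : ∀ m n : ℤ, M (W m) (L n) = 0)
    (hWW : ∀ m n : ℤ, M (W m) (W n) = k₁ • L (m + n + 1))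
    -- `B` is the ℂ-bilinear Lie bracket of Coeff(W(a,b)) on basis elements:
    (B : A →ₗ[ℂ] A →ₗ[ℂ] A)
    (hBLL : ∀ m n : ℤ, B (L m) (L n) = ((m : ℂ) - (n : ℂ)) • L (m + n))
    (hBLW : ∀ m n : ℤ, B (L m) (W n) =
      (((m : ℂ) + 1) * ((1 : ℂ) - 1) - ((n : ℂ) + 1)) • W (m + n)
        + b • W (m + n + 1))
    (hBWL : ∀ m n : ℤ, B (W n) (L m) = -B (L m) (W n))
    (hBWW : ∀ m n : ℤ, B (W m) (W n) = 0) :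
    -- `∘ = M` is left-symmetric:
    ((∀ x y z : A, M (M x y) z - M x (M y z) = M (M y x) z - M y (M x z)) ∧
    -- and compatible with the Lie bracket:
    (∀ x y : A, M x y - M y x = B x y)) :=
  ⟨M.isLeftSymmetric_of_basis lwBasis
      (associator_lwBasis_comm hLL hLW hWL hWW),
    M.sub_flip_eq_of_basis lwBasis B
      (sub_lwBasis_eq_bracket hLL hLW hWL hWW hBLL hBLW hBWL hBWW)⟩

/-- Corollary 3.8 (4), on Coeff(W(1,b)), with `k₁ ≠ 0`. -/
theorem stmt15 (b k₁ : ℂ) (hk : k₁ ≠ 0)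
    -- `M` is the ℂ-bilinear product `∘` given on basis elements by:
    (M : A →ₗ[ℂ] A →ₗ[ℂ] A)
    (hLL : ∀ m n : ℤ, M (L m) (L n) = (2 * b) • L (m + n + 1) - ((n : ℂ) + 1) • L (m + n))
    (hLW : ∀ m n : ℤ, M (L m) (W n) = -((n : ℂ) + 1) • W (m + n) + b • W (m + n + 1))
    (hWL : ∀ m n : ℤ, M (W m) (L n) = 0)
    (hWW : ∀ m n : ℤ, M (W m) (W n) = k₁ • L (m + n + 1))
    -- `B` is the ℂ-bilinear Lie bracket of Coeff(W(a,b)) on basis elements: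
    (B : A →ₗ[ℂ] A →ₗ[ℂ] A)
    (hBLL : ∀ m n : ℤ, B (L m) (L n) = ((m : ℂ) - (n : ℂ)) • L (m + n))
    (hBLW : ∀ m n : ℤ, B (L m) (W n) =
      (((m : ℂ) + 1) * ((1 : ℂ) - 1) - ((n : ℂ) + 1)) • W (m + n)
        + b • W (m + n + 1))
    (hBWL : ∀ m n : ℤ, B (W n) (L m) = -B (L m) (W n))
    (hBWW : ∀ m n : ℤ, B (W m) (W n) = 0) :
    -- `∘ = M` is left-symmetric:
    ((∀ x y z : A, M (M x y) z - M x (M y z) = M (M y x) z - M y (M x z)) ∧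
    -- and compatible with the Lie bracket:
    (∀ x y : A, M x y - M y x = B x y)) :=
  stmt15_general b k₁ M hLL hLW hWL hWW B hBLL hBLW hBWL hBWW

end
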